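/- arXiv:1410.8714 — 3 statements merged into one kernel-verified Lean document; each statement's English description precedes it below -/
import Mathlib

section
/- Gallager's source function E_s(ρ) = (1+ρ) · log(∑_v p(v)^{1/(1+ρ)}) is monotonically nondecreasing on [0, ∞). -/
/-- Gallager's source function is monotonically nondecreasing on `[0, ∞)`. -/
theorem Es_monotone {V : Type*} [Fintype V] [Nonempty V] (p : V → ℝ)
    (hpos : ∀ v, 0 < p v) (hsum : ∑ v, p v = 1) :
    MonotoneOn (fun ρ : ℝ => (1 + ρ) * Real.log (∑ v, p v ^ ((1 : ℝ) / (1 + ρ))))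
      (Set.Ici (0 : ℝ)) := by
  have hple : ∀ v, p v ≤ 1 := by
    intro v
    rw [← hsum]
    exact Finset.single_le_sum (fun i _ => (hpos i).le) (Finset.mem_univ v)
  -- S(ρ) ≥ 1 for ρ ≥ 0
  have hS1 : ∀ ρ : ℝ, 0 ≤ ρ → (1 : ℝ) ≤ ∑ v, p v ^ ((1 : ℝ) / (1 + ρ)) := by
    intro ρ hρ
    have h1ρ : (0:ℝ) < 1 + ρ := by linarith
    calc (1:ℝ) = ∑ v, p v := hsum.symm
    _ ≤ ∑ v, p v ^ ((1 : ℝ) / (1 + ρ)) := by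
        apply Finset.sum_le_sum
        intro v _
        have : p v ^ (1:ℝ) ≤ p v ^ ((1 : ℝ) / (1 + ρ)) := by
          apply Real.rpow_le_rpow_of_exponent_ge (hpos v) (hple v)
          rw [div_le_one h1ρ]; linarith
        simpa using this
  intro a ha b hb hab
  simp only [Set.mem_Ici] at ha hb
  have h1a : (0:ℝ) < 1 + a := by linarith
  have h1b : (0:ℝ) < 1 + b := by linarith
  have hSab : ∑ v, p v ^ ((1 : ℝ) / (1 + a)) ≤ ∑ v, p v ^ ((1 : ℝ) / (1 + b)) := by
    apply Finset.sum_le_sum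
    intro v _
    apply Real.rpow_le_rpow_of_exponent_ge (hpos v) (hple v)
    apply div_le_div_of_nonneg_left (by norm_num) h1a (by linarith)
  have hlogA : 0 ≤ Real.log (∑ v, p v ^ ((1 : ℝ) / (1 + a))) :=
    Real.log_nonneg (hS1 a ha)
  have hlog : Real.log (∑ v, p v ^ ((1 : ℝ) / (1 + a)))
      ≤ Real.log (∑ v, p v ^ ((1 : ℝ) / (1 + b))) :=
    Real.log_le_log (by linarith [hS1 a ha]) hSab
  dsimp only
  exact mul_le_mul (by linarith) hlog hlogA (by linarith)
end

section
/- Gallager's source function E_s is convex on [0, ∞): for all ρ₁, ρ₂ ≥ 0 and λ ∈ [0,1], E_s(λρ₁ + (1-λ)ρ₂) ≤ λ E_s(ρ₁) + (1-λ) E_s(ρ₂). -/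
/-!
Write `s = 1 + ρ`, so that `E_s(ρ) = s · F(1/s)` with `F t = log ∑ p(v)^t`. By Hölder's inequality
`F` is convex, and `s ↦ s · F(1/s)` is the perspective of `F` evaluated at `1/s`, which inherits
convexity on `(0, ∞)`: for `c = a s₁ + b s₂` the point `1/c` is the convex combination of `1/s₁`
and `1/s₂` with weights `a s₁ / c` and `b s₂ / c`.
-/

open Finset Real

lemma Real.sum_rpow_mul_rpow_le {ι : Type*} (s : Finset ι) {x y : ι → ℝ}
    (hx : ∀ i ∈ s, 0 ≤ x i) (hy : ∀ i ∈ s, 0 ≤ y i) {θ : ℝ} (hθ₀ : 0 < θ) (hθ₁ : θ < 1) :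
    ∑ i ∈ s, x i ^ θ * y i ^ (1 - θ) ≤ (∑ i ∈ s, x i) ^ θ * (∑ i ∈ s, y i) ^ (1 - θ) := by
  have hθ₁' : 0 < 1 - θ := sub_pos.mpr hθ₁
  have hconj : HolderConjugate θ⁻¹ (1 - θ)⁻¹ :=
    .inv_inv hθ₀ hθ₁' (add_sub_cancel θ 1)
  calc ∑ i ∈ s, x i ^ θ * y i ^ (1 - θ)
      ≤ (∑ i ∈ s, (x i ^ θ) ^ θ⁻¹) ^ (1 / θ⁻¹) *
          (∑ i ∈ s, (y i ^ (1 - θ)) ^ (1 - θ)⁻¹) ^ (1 / (1 - θ)⁻¹) :=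
        inner_le_Lp_mul_Lq_of_nonneg s hconj (fun i hi => rpow_nonneg (hx i hi) θ)
          (fun i hi => rpow_nonneg (hy i hi) (1 - θ))
    _ = (∑ i ∈ s, x i) ^ θ * (∑ i ∈ s, y i) ^ (1 - θ) := by
        rw [one_div, one_div, inv_inv, inv_inv,
          sum_congr rfl fun i hi => rpow_rpow_inv (hx i hi) hθ₀.ne',
          sum_congr rfl fun i hi => rpow_rpow_inv (hy i hi) hθ₁'.ne']

lemma Real.convexOn_log_sum_rpow {ι : Type*} {s : Finset ι} (hs : s.Nonempty) {p : ι → ℝ}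
    (hp : ∀ i ∈ s, 0 < p i) : ConvexOn ℝ Set.univ fun t : ℝ => log (∑ i ∈ s, p i ^ t) := by
  have hsum_pos : ∀ t : ℝ, 0 < ∑ i ∈ s, p i ^ t := fun t =>
    sum_pos (fun i hi => rpow_pos_of_pos (hp i hi) t) hs
  refine convexOn_iff_forall_pos.mpr ⟨convex_univ, fun t₁ _ t₂ _ a b ha hb hab => ?_⟩
  obtain rfl : b = 1 - a := by linarith
  have holder : ∑ i ∈ s, p i ^ (a * t₁ + (1 - a) * t₂)
      ≤ (∑ i ∈ s, p i ^ t₁) ^ a * (∑ i ∈ s, p i ^ t₂) ^ (1 - a) := by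
    calc ∑ i ∈ s, p i ^ (a * t₁ + (1 - a) * t₂)
        = ∑ i ∈ s, (p i ^ t₁) ^ a * (p i ^ t₂) ^ (1 - a) := by
          refine sum_congr rfl fun i hi => ?_
          rw [← rpow_mul (hp i hi).le, ← rpow_mul (hp i hi).le, ← rpow_add (hp i hi),
            mul_comm t₁, mul_comm t₂]
      _ ≤ _ := sum_rpow_mul_rpow_le s (fun i hi => (rpow_pos_of_pos (hp i hi) t₁).le)
          (fun i hi => (rpow_pos_of_pos (hp i hi) t₂).le) ha (by linarith)
  calc log (∑ i ∈ s, p i ^ (a • t₁ + (1 - a) • t₂))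
      ≤ log ((∑ i ∈ s, p i ^ t₁) ^ a * (∑ i ∈ s, p i ^ t₂) ^ (1 - a)) :=
        log_le_log (hsum_pos _) holder
    _ = a • log (∑ i ∈ s, p i ^ t₁) + (1 - a) • log (∑ i ∈ s, p i ^ t₂) := by
        rw [log_mul (rpow_pos_of_pos (hsum_pos t₁) a).ne' (rpow_pos_of_pos (hsum_pos t₂) _).ne',
          log_rpow (hsum_pos t₁), log_rpow (hsum_pos t₂), smul_eq_mul, smul_eq_mul]

lemma ConvexOn.mul_comp_inv {f : ℝ → ℝ} (hf : ConvexOn ℝ (Set.Ioi 0) f) :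
    ConvexOn ℝ (Set.Ioi 0) fun s => s * f s⁻¹ := by
  refine convexOn_iff_forall_pos.mpr ⟨convex_Ioi 0, fun s₁ hs₁ s₂ hs₂ a b ha hb hab => ?_⟩
  simp only [Set.mem_Ioi, smul_eq_mul] at hs₁ hs₂ ⊢
  set c := a * s₁ + b * s₂
  have hc : 0 < c := by positivity
  have hweights : a * s₁ / c + b * s₂ / c = 1 := by rw [← add_div, div_self hc.ne']
  have hinv : c⁻¹ = (a * s₁ / c) * s₁⁻¹ + (b * s₂ / c) * s₂⁻¹ := by
    field_simp
    exact hab.symm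
  calc c * f c⁻¹
      ≤ c * ((a * s₁ / c) * f s₁⁻¹ + (b * s₂ / c) * f s₂⁻¹) := by
        rw [hinv]
        exact mul_le_mul_of_nonneg_left (hf.2 (inv_pos.mpr hs₁) (inv_pos.mpr hs₂)
          (by positivity) (by positivity) hweights) hc.le
    _ = a * (s₁ * f s₁⁻¹) + b * (s₂ * f s₂⁻¹) := by
        field_simp

theorem Es_convex_general {V : Type*} [Fintype V] [Nonempty V] (p : V → ℝ)
    (hpos : ∀ v, 0 < p v) :
    ∀ ρ₁ ρ₂ l : ℝ, 0 ≤ ρ₁ → 0 ≤ ρ₂ → 0 ≤ l → l ≤ 1 →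
      (1 + (l * ρ₁ + (1 - l) * ρ₂)) *
          Real.log (∑ v, p v ^ ((1 : ℝ) / (1 + (l * ρ₁ + (1 - l) * ρ₂))))
        ≤ l * ((1 + ρ₁) * Real.log (∑ v, p v ^ ((1 : ℝ) / (1 + ρ₁))))
          + (1 - l) * ((1 + ρ₂) * Real.log (∑ v, p v ^ ((1 : ℝ) / (1 + ρ₂)))) := by
  intro ρ₁ ρ₂ l hρ₁ hρ₂ hl₀ hl₁
  have hconv := ((convexOn_log_sum_rpow univ_nonempty fun v _ => hpos v).subset
    (Set.subset_univ _) (convex_Ioi 0)).mul_comp_inv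
  have key := hconv.2 (x := 1 + ρ₁) (y := 1 + ρ₂) (Set.mem_Ioi.mpr (by linarith))
    (Set.mem_Ioi.mpr (by linarith)) hl₀ (sub_nonneg.mpr hl₁) (add_sub_cancel l 1)
  have hmid : 1 + (l * ρ₁ + (1 - l) * ρ₂) = l * (1 + ρ₁) + (1 - l) * (1 + ρ₂) := by ring
  rw [hmid]
  simpa only [smul_eq_mul, one_div] using key

/-- Gallager's source function is convex on `[0, ∞)`. -/
theorem Es_convex {V : Type*} [Fintype V] [Nonempty V] (p : V → ℝ)
    (hpos : ∀ v, 0 < p v) (hsum : ∑ v, p v = 1) :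
    ∀ ρ₁ ρ₂ l : ℝ, 0 ≤ ρ₁ → 0 ≤ ρ₂ → 0 ≤ l → l ≤ 1 →
      (1 + (l * ρ₁ + (1 - l) * ρ₂)) *
          Real.log (∑ v, p v ^ ((1 : ℝ) / (1 + (l * ρ₁ + (1 - l) * ρ₂))))
        ≤ l * ((1 + ρ₁) * Real.log (∑ v, p v ^ ((1 : ℝ) / (1 + ρ₁))))
          + (1 - l) * ((1 + ρ₂) * Real.log (∑ v, p v ^ ((1 : ℝ) / (1 + ρ₂)))) :=
  Es_convex_general p hpos
end

section
/- The derivative of Gallager's source function satisfies E_s'(ρ) = -∑_v p_{1/(1+ρ)}(v) log p_{1/(1+ρ)}(v), i.e., the derivative of E_s at ρ equals the Shannon entropy of the tilted distribution p_{1/(1+ρ)}, where p_σ(v) = p(v)^σ / ∑_{w} p(w)^σ. -/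
/-! Writing `σ = 1/(1+ρ)` and `g(σ) = log ∑_v p(v)^σ`, the source function is the perspective
`E_s(ρ) = (1+ρ) g(1/(1+ρ))`, whose derivative is `g(σ) - σ g'(σ)`. Here `g'(σ)` is the mean of
`log p` under the tilted distribution `p_σ`, and since `log p_σ = σ log p - g(σ)`, the quantity
`g(σ) - σ g'(σ)` is exactly the entropy of `p_σ`. -/

open Real Finset

namespace Gallager

variable {V : Type*} [Fintype V] {p : V → ℝ}

noncomputable def tilted (p : V → ℝ) (σ : ℝ) (v : V) : ℝ :=
  p v ^ σ / ∑ w, p w ^ σ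

lemma sum_rpow_pos [Nonempty V] (hp : ∀ v, 0 < p v) (σ : ℝ) : 0 < ∑ v, p v ^ σ :=
  sum_pos (fun v _ => rpow_pos_of_pos (hp v) σ) univ_nonempty

theorem hasDerivAt_log_sum_rpow [Nonempty V] (hp : ∀ v, 0 < p v) (σ : ℝ) :
    HasDerivAt (fun s => log (∑ v, p v ^ s)) (∑ v, tilted p σ v * log (p v)) σ := by
  have hsum : HasDerivAt (fun s => ∑ v, p v ^ s) (∑ v, p v ^ σ * log (p v)) σ :=
    HasDerivAt.fun_sum fun v _ => (hasStrictDerivAt_const_rpow (hp v) σ).hasDerivAt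
  convert hsum.log (sum_rpow_pos hp σ).ne' using 1
  simp only [tilted, div_mul_eq_mul_div, sum_div]

theorem neg_sum_tilted_mul_log [Nonempty V] (hp : ∀ v, 0 < p v) (σ : ℝ) :
    -∑ v, tilted p σ v * log (tilted p σ v) =
      log (∑ v, p v ^ σ) - σ * ∑ v, tilted p σ v * log (p v) := by
  have hZ := sum_rpow_pos hp σ
  have hlog : ∀ v, log (tilted p σ v) = σ * log (p v) - log (∑ w, p w ^ σ) := fun v => by
    rw [tilted, log_div (rpow_pos_of_pos (hp v) σ).ne' hZ.ne', log_rpow (hp v)]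
  have hmass : ∑ v, tilted p σ v = 1 := by
    simp only [tilted, ← sum_div, div_self hZ.ne']
  simp only [hlog, mul_sub, sum_sub_distrib, ← sum_mul, hmass, mul_sum, mul_left_comm _ σ]
  ring

theorem _root_.HasDerivAt.perspective {g : ℝ → ℝ} {g' ρ : ℝ} (hg : HasDerivAt g g' (1 / (1 + ρ)))
    (hρ : 1 + ρ ≠ 0) :
    HasDerivAt (fun x => (1 + x) * g (1 / (1 + x))) (g (1 / (1 + ρ)) - 1 / (1 + ρ) * g') ρ := by
  have hlin : HasDerivAt (fun x : ℝ => 1 + x) 1 ρ := (hasDerivAt_id ρ).const_add 1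
  have hinv : HasDerivAt (fun x : ℝ => 1 / (1 + x)) (-1 / (1 + ρ) ^ 2) ρ := by
    simpa [one_div] using hlin.fun_inv hρ
  refine (hlin.fun_mul (hg.comp ρ hinv)).congr_deriv ?_
  simp only [Function.comp_apply]
  field_simp
  ring

end Gallager

theorem Es_deriv_general {V : Type*} [Fintype V] [Nonempty V] (p : V → ℝ)
    (hpos : ∀ v, 0 < p v) (ρ : ℝ) (hρ : 0 ≤ ρ) :
    HasDerivAt (fun ρ : ℝ => (1 + ρ) * Real.log (∑ v, p v ^ ((1 : ℝ) / (1 + ρ))))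
      (-∑ v, (p v ^ ((1 : ℝ) / (1 + ρ)) / ∑ w, p w ^ ((1 : ℝ) / (1 + ρ))) *
          Real.log (p v ^ ((1 : ℝ) / (1 + ρ)) / ∑ w, p w ^ ((1 : ℝ) / (1 + ρ))))
      ρ := by
  have h := (Gallager.hasDerivAt_log_sum_rpow hpos (1 / (1 + ρ))).perspective (by linarith)
  rw [← Gallager.neg_sum_tilted_mul_log hpos] at h
  exact h

/-- The derivative of Gallager's source function at `ρ` equals the Shannon entropy of the
tilted distribution `p_{1/(1+ρ)}`, where `p_σ(v) = p(v)^σ / ∑_w p(w)^σ`. -/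
theorem Es_deriv {V : Type*} [Fintype V] [Nonempty V] (p : V → ℝ)
    (hpos : ∀ v, 0 < p v) (hsum : ∑ v, p v = 1) (ρ : ℝ) (hρ : 0 ≤ ρ) :
    HasDerivAt (fun ρ : ℝ => (1 + ρ) * Real.log (∑ v, p v ^ ((1 : ℝ) / (1 + ρ))))
      (-∑ v, (p v ^ ((1 : ℝ) / (1 + ρ)) / ∑ w, p w ^ ((1 : ℝ) / (1 + ρ))) *
          Real.log (p v ^ ((1 : ℝ) / (1 + ρ)) / ∑ w, p w ^ ((1 : ℝ) / (1 + ρ))))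
      ρ :=
  Es_deriv_general p hpos ρ hρ
end
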